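/- arXiv:2102.12930 — 2 statements merged into one kernel-verified Lean document; each statement's English description precedes it below -/
import Mathlib

section
/- Let a_ij and a'_ij (1 ≤ i ≠ j ≤ 3) be integers such that for each pair i < j: a_ij − a_ji = a'_ij − a'_ji and |a_ij + a_ji| = |a'_ij + a'_ji|, and moreover (a₁₂+a₂₁)(a₁₃+a₃₁)(a₂₃+a₃₂) = (a'₁₂+a'₂₁)(a'₁₃+a'₃₁)(a'₂₃+a'₃₂). Then there exist signs ε₁₂, ε₁₃, ε₂₃ ∈ {+1, −1} with ε₁₂·ε₁₃·ε₂₃ = 1 such that for each pair i < j: if ε_ij = 1 then (a'_ij, a'_ji) = (a_ij, a_ji), and if ε_ij = −1 then (a'_ij, a'_ji) = (−a_ji, −a_ij). -/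
lemma stmt_5_pair (a b a' b' : ℤ) (h : a - b = a' - b') (h' : |a + b| = |a' + b'|) :
    ∃ e : ℤ, (e = 1 ∨ e = -1) ∧ a' + b' = e * (a + b) ∧
      (e = 1 → a' = a ∧ b' = b) ∧ (e = -1 → a' = -b ∧ b' = -a) := by
  rcases abs_eq_abs.mp h' with hs | hs
  · exact ⟨1, Or.inl rfl, by linarith, fun _ => ⟨by linarith, by linarith⟩, by omega⟩
  · exact ⟨-1, Or.inr rfl, by linarith, by omega, fun _ => ⟨by linarith, by linarith⟩⟩

theorem stmt_5 (a12 a21 a13 a31 a23 a32 a12' a21' a13' a31' a23' a32' : ℤ)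
    (h12 : a12 - a21 = a12' - a21') (h12' : |a12 + a21| = |a12' + a21'|)
    (h13 : a13 - a31 = a13' - a31') (h13' : |a13 + a31| = |a13' + a31'|)
    (h23 : a23 - a32 = a23' - a32') (h23' : |a23 + a32| = |a23' + a32'|)
    (hprod : (a12 + a21) * (a13 + a31) * (a23 + a32)
      = (a12' + a21') * (a13' + a31') * (a23' + a32')) :
    ∃ e12 e13 e23 : ℤ,
      (e12 = 1 ∨ e12 = -1) ∧ (e13 = 1 ∨ e13 = -1) ∧ (e23 = 1 ∨ e23 = -1) ∧
      e12 * e13 * e23 = 1 ∧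
      (e12 = 1 → a12' = a12 ∧ a21' = a21) ∧
      (e12 = -1 → a12' = -a21 ∧ a21' = -a12) ∧
      (e13 = 1 → a13' = a13 ∧ a31' = a31) ∧
      (e13 = -1 → a13' = -a31 ∧ a31' = -a13) ∧
      (e23 = 1 → a23' = a23 ∧ a32' = a32) ∧
      (e23 = -1 → a23' = -a32 ∧ a32' = -a23) := by
  obtain ⟨e12, he12, hs12, hp12, hn12⟩ := stmt_5_pair a12 a21 a12' a21' h12 h12'
  obtain ⟨e13, he13, hs13, hp13, hn13⟩ := stmt_5_pair a13 a31 a13' a31' h13 h13'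
  obtain ⟨e23, he23, hs23, hp23, hn23⟩ := stmt_5_pair a23 a32 a23' a32' h23 h23'
  by_cases hz12 : a12 + a21 = 0
  · -- flexible first pair
    have hz12' : a12' + a21' = 0 := by
      have := abs_eq_zero.mpr hz12
      rw [h12'] at this; exact abs_eq_zero.mp this
    refine ⟨e13 * e23, e13, e23, ?_, he13, he23, ?_, ?_, ?_, hp13, hn13, hp23, hn23⟩
    · rcases he13 with h | h <;> rcases he23 with h' | h' <;> subst h <;> subst h' <;> norm_num
    · rcases he13 with h | h <;> rcases he23 with h' | h' <;> subst h <;> subst h' <;> ring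
    · exact fun _ => ⟨by omega, by omega⟩
    · exact fun _ => ⟨by omega, by omega⟩
  · by_cases hz13 : a13 + a31 = 0
    · have hz13' : a13' + a31' = 0 := by
        have := abs_eq_zero.mpr hz13
        rw [h13'] at this; exact abs_eq_zero.mp this
      refine ⟨e12, e12 * e23, e23, he12, ?_, he23, ?_, hp12, hn12, ?_, ?_, hp23, hn23⟩
      · rcases he12 with h | h <;> rcases he23 with h' | h' <;> subst h <;> subst h' <;> norm_num
      · rcases he12 with h | h <;> rcases he23 with h' | h' <;> subst h <;> subst h' <;> ring
      · exact fun _ => ⟨by omega, by omega⟩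
      · exact fun _ => ⟨by omega, by omega⟩
    · by_cases hz23 : a23 + a32 = 0
      · have hz23' : a23' + a32' = 0 := by
          have := abs_eq_zero.mpr hz23
          rw [h23'] at this; exact abs_eq_zero.mp this
        refine ⟨e12, e13, e12 * e13, he12, he13, ?_, ?_, hp12, hn12, hp13, hn13, ?_, ?_⟩
        · rcases he12 with h | h <;> rcases he13 with h' | h' <;> subst h <;> subst h' <;> norm_num
        · rcases he12 with h | h <;> rcases he13 with h' | h' <;> subst h <;> subst h' <;> ring
        · exact fun _ => ⟨by omega, by omega⟩
        · exact fun _ => ⟨by omega, by omega⟩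
      · -- all sums nonzero
        have key : (1 - e12 * e13 * e23) * ((a12 + a21) * ((a13 + a31) * (a23 + a32))) = 0 := by
          rw [hs12, hs13, hs23] at hprod
          linear_combination hprod
        have hP : (a12 + a21) * ((a13 + a31) * (a23 + a32)) ≠ 0 :=
          mul_ne_zero hz12 (mul_ne_zero hz13 hz23)
        have he : e12 * e13 * e23 = 1 := by
          rcases mul_eq_zero.mp key with h | h
          · omega
          · exact absurd h hP
        exact ⟨e12, e13, e23, he12, he13, he23, he, hp12, hn12, hp13, hn13, hp23, hn23⟩
end

section
/- Let x₁₂, x₁₃, x₂₃, y₁₂, y₁₃, y₂₃, z be integers such that there exist integers a_ij (1 ≤ i ≠ j ≤ 3) with a₁₂+a₂₁ ≡ a₁₃+a₃₁ ≡ a₂₃+a₃₂ (mod 2), x_ij = a_ij − a_ji, y_ij = ±(a_ij + a_ji), and z = (a₁₂+a₂₁)(a₁₃+a₃₁)(a₂₃+a₃₂). Then all six numbers x₁₂, x₁₃, x₂₃, y₁₂, y₁₃, y₂₃ are congruent modulo 2 and |z| = |y₁₂|·|y₁₃|·|y₂₃|. Conversely, given any integers x_ij, y_ij, z such that all six numbers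 x₁₂, x₁₃, x₂₃, y₁₂, y₁₃, y₂₃ are congruent modulo 2 and |z| = |y₁₂|·|y₁₃|·|y₂₃| (i.e. z = ±y₁₂y₁₃y₂₃), such integers a_ij exist. -/
set_option maxHeartbeats 1000000 in
theorem stmt_16 :
    (∀ a12 a21 a13 a31 a23 a32 x12 x13 x23 y12 y13 y23 z : ℤ,
      (a12 + a21) % 2 = (a13 + a31) % 2 → (a13 + a31) % 2 = (a23 + a32) % 2 →
      x12 = a12 - a21 → x13 = a13 - a31 → x23 = a23 - a32 →
      (y12 = a12 + a21 ∨ y12 = -(a12 + a21)) →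
      (y13 = a13 + a31 ∨ y13 = -(a13 + a31)) →
      (y23 = a23 + a32 ∨ y23 = -(a23 + a32)) →
      z = (a12 + a21) * (a13 + a31) * (a23 + a32) →
      (x12 % 2 = x13 % 2 ∧ x13 % 2 = x23 % 2 ∧ x23 % 2 = y12 % 2 ∧
        y12 % 2 = y13 % 2 ∧ y13 % 2 = y23 % 2) ∧
      |z| = |y12| * |y13| * |y23|) ∧
    (∀ x12 x13 x23 y12 y13 y23 z : ℤ,
      (x12 % 2 = x13 % 2 ∧ x13 % 2 = x23 % 2 ∧ x23 % 2 = y12 % 2 ∧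
        y12 % 2 = y13 % 2 ∧ y13 % 2 = y23 % 2) →
      (z = y12 * y13 * y23 ∨ z = -(y12 * y13 * y23)) →
      ∃ a12 a21 a13 a31 a23 a32 : ℤ,
        (a12 + a21) % 2 = (a13 + a31) % 2 ∧ (a13 + a31) % 2 = (a23 + a32) % 2 ∧
        x12 = a12 - a21 ∧ x13 = a13 - a31 ∧ x23 = a23 - a32 ∧
        (y12 = a12 + a21 ∨ y12 = -(a12 + a21)) ∧
        (y13 = a13 + a31 ∨ y13 = -(a13 + a31)) ∧
        (y23 = a23 + a32 ∨ y23 = -(a23 + a32)) ∧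
        z = (a12 + a21) * (a13 + a31) * (a23 + a32)) := by
  constructor
  · intro a12 a21 a13 a31 a23 a32 x12 x13 x23 y12 y13 y23 z h1 h2 hx12 hx13 hx23 hy12 hy13 hy23 hz
    have p12 : y12 % 2 = (a12 + a21) % 2 := by rcases hy12 with h|h <;> omega
    have p13 : y13 % 2 = (a13 + a31) % 2 := by rcases hy13 with h|h <;> omega
    have p23 : y23 % 2 = (a23 + a32) % 2 := by rcases hy23 with h|h <;> omega
    refine ⟨by clear hz; omega, ?_⟩
    have h12 : |y12| = |a12 + a21| := by rcases hy12 with h|h <;> simp only [h, abs_neg]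
    have h13 : |y13| = |a13 + a31| := by rcases hy13 with h|h <;> simp only [h, abs_neg]
    have h23 : |y23| = |a23 + a32| := by rcases hy23 with h|h <;> simp only [h, abs_neg]
    rw [hz, abs_mul, abs_mul, h12, h13, h23]
  · intro x12 x13 x23 y12 y13 y23 z hpar hz
    rcases hz with hz | hz
    · obtain ⟨k1, hk1⟩ : ∃ k, x12 + y12 = 2 * k := ⟨(x12 + y12) / 2, by omega⟩
      obtain ⟨k2, hk2⟩ : ∃ k, x13 + y13 = 2 * k := ⟨(x13 + y13) / 2, by omega⟩
      obtain ⟨k3, hk3⟩ : ∃ k, x23 + y23 = 2 * k := ⟨(x23 + y23) / 2, by omega⟩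
      refine ⟨k1, y12 - k1, k2, y13 - k2, k3, y23 - k3, by omega, by omega, by omega, by omega,
        by omega, Or.inl (by omega), Or.inl (by omega), Or.inl (by omega), ?_⟩
      have e1 : k1 + (y12 - k1) = y12 := by ring
      have e2 : k2 + (y13 - k2) = y13 := by ring
      have e3 : k3 + (y23 - k3) = y23 := by ring
      rw [e1, e2, e3, hz]
    · obtain ⟨k1, hk1⟩ : ∃ k, x12 - y12 = 2 * k := ⟨(x12 - y12) / 2, by omega⟩
      obtain ⟨k2, hk2⟩ : ∃ k, x13 + y13 = 2 * k := ⟨(x13 + y13) / 2, by omega⟩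
      obtain ⟨k3, hk3⟩ : ∃ k, x23 + y23 = 2 * k := ⟨(x23 + y23) / 2, by omega⟩
      refine ⟨k1, -y12 - k1, k2, y13 - k2, k3, y23 - k3, by omega, by omega, by omega, by omega,
        by omega, Or.inr (by omega), Or.inl (by omega), Or.inl (by omega), ?_⟩
      have e1 : k1 + (-y12 - k1) = -y12 := by ring
      have e2 : k2 + (y13 - k2) = y13 := by ring
      have e3 : k3 + (y23 - k3) = y23 := by ring
      rw [e1, e2, e3, hz]; ring
end
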